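/- arXiv:1603.03075 — 2 statements merged into one kernel-verified Lean document; each statement's English description precedes it below -/
import Mathlib

section
/- Let T be a set and R : T × T → ℂ Hermitian with |R(s,t)| ∈ {0,1}. If t ∈ T^n, π ∈ S_n^1(t) and ν ∈ S_n^1(t_π) (so that also πν ∈ S_n^1(t)), then the cocycle identity R_{π^{-1}}(t) · R_{ν^{-1}}(t_π) = R_{ν^{-1}π^{-1}}(t) holds. -/
/-!
Compare two orderings `α`, `β` of the positions and multiply `r i j` over the pairs that `α`
puts in the order `i, j` and `β` in the order `j, i`. Then `R_σ(t)` is this product for the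
orderings `id` and `σ`, and `R_ν(t_π)` the one for `π⁻¹` and `ν π⁻¹`. Grouping each pair `(i, j)`
with `(j, i)`, the cocycle identity reduces to one pair at a time, and it is a tautology except
for a pair reversed by `β` and restored by `γ`, where it reads `R(t_i, t_j) R(t_j, t_i) = 1`,
i.e. `|R(t_i, t_j)|² = 1` for Hermitian `R`. Since `|R| ∈ {0, 1}`, the hypothesis
`|R_{π⁻¹}(t)| = 1` gives exactly this for the pairs reversed by `π⁻¹`.
-/

/-- `R_π(t) = ∏_{i<j, π(i)>π(j)} R(t_i, t_j)`. -/
def Qprod {T : Type*} (n : ℕ) (R : T → T → ℂ) (π : Equiv.Perm (Fin n)) (t : Fin n → T) : ℂ :=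
  ∏ p ∈ Finset.univ.filter (fun p : Fin n × Fin n => p.1 < p.2 ∧ π p.2 < π p.1),
    R (t p.1) (t p.2)

open Finset Function

section InversionProd

variable {ι κ M : Type*} [Fintype ι] [LinearOrder κ] [CommMonoid M]

def inversionProd (α β : ι → κ) (r : ι → ι → M) : M :=
  ∏ p ∈ univ.filter (fun p : ι × ι => α p.1 < α p.2 ∧ β p.2 < β p.1), r p.1 p.2

theorem inversionProd_eq_prod_ite (α β : ι → κ) (r : ι → ι → M) :
    inversionProd α β r = ∏ p : ι × ι, if α p.1 < α p.2 ∧ β p.2 < β p.1 then r p.1 p.2 else 1 :=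
  prod_filter _ _

theorem inversionProd_comp_equiv {ι' : Type*} [Fintype ι'] (e : ι' ≃ ι) (α β : ι → κ)
    (r : ι → ι → M) :
    inversionProd (α ∘ e) (β ∘ e) (fun i j => r (e i) (e j)) = inversionProd α β r := by
  simp only [inversionProd_eq_prod_ite]
  exact Fintype.prod_equiv (e.prodCongr e) _ _ fun _ => rfl

theorem prod_pairs_eq_prod_lt_mul_swap {α : ι → κ} (hα : Injective α) (f : ι × ι → M)
    (hf : ∀ i, f (i, i) = 1) :
    ∏ p, f p = ∏ p ∈ univ.filter (fun p : ι × ι => α p.1 < α p.2), f p * f p.swap := by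
  have hswap : ∏ p ∈ univ.filter (fun p : ι × ι => α p.1 < α p.2), f p.swap
      = ∏ p ∈ univ.filter (fun p : ι × ι => α p.2 < α p.1), f p :=
    prod_nbij' Prod.swap Prod.swap (by simp) (by simp) (by simp) (by simp) (by simp)
  have hdiag : ∏ p ∈ univ.filter (fun p : ι × ι => α p.2 < α p.1), f p
      = ∏ p ∈ univ.filter (fun p : ι × ι => ¬ α p.1 < α p.2), f p := by
    refine prod_subset (fun p => by simpa using le_of_lt) fun ⟨i, j⟩ hp hp' => ?_
    obtain rfl : i = j := hα <| by simp_all [eq_iff_le_not_lt]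
    exact hf i
  rw [prod_mul_distrib, hswap, hdiag, prod_filter_mul_prod_filter_not]

theorem inversionProd_mul_inversionProd {α β γ : ι → κ} (hα : Injective α) (hβ : Injective β)
    (hγ : Injective γ) (r : ι → ι → M)
    (hr : ∀ i j, α i < α j → β j < β i → r i j * r j i = 1) :
    inversionProd α β r * inversionProd β γ r = inversionProd α γ r := by
  simp only [inversionProd_eq_prod_ite, ← prod_mul_distrib]
  rw [prod_pairs_eq_prod_lt_mul_swap hα _ (by simp), prod_pairs_eq_prod_lt_mul_swap hα _ (by simp)]
  refine prod_congr rfl fun ⟨i, j⟩ hij => ?_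
  replace hij : α i < α j := (mem_filter.1 hij).2
  have hne : i ≠ j := fun h => hij.ne (congrArg α h)
  rcases (hβ.ne hne).lt_or_gt with hb | hb <;> rcases (hγ.ne hne).lt_or_gt with hc | hc <;>
    simp [hij, hij.not_gt, hb, hb.not_gt, hc, hc.not_gt, hr i j hij]

end InversionProd

section Qprod

variable {T : Type*} {n : ℕ} (R : T → T → ℂ)

theorem Qprod_eq_inversionProd (σ : Equiv.Perm (Fin n)) (t : Fin n → T) :
    Qprod n R σ t = inversionProd id σ (fun i j => R (t i) (t j)) :=
  rfl

theorem Qprod_comp_eq_inversionProd (σ π : Equiv.Perm (Fin n)) (t : Fin n → T) :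
    Qprod n R σ (t ∘ π) = inversionProd ⇑π⁻¹ (σ ∘ ⇑π⁻¹) (fun i j => R (t i) (t j)) := by
  rw [Qprod_eq_inversionProd, ← inversionProd_comp_equiv π ⇑π⁻¹, comp_assoc,
    Equiv.Perm.coe_inv, Equiv.symm_comp_self, comp_id]
  rfl

theorem norm_eq_one_of_norm_Qprod_eq_one (habs : ∀ s t : T, ‖R s t‖ = 0 ∨ ‖R s t‖ = 1)
    {σ : Equiv.Perm (Fin n)} {t : Fin n → T} (hσ : ‖Qprod n R σ t‖ = 1) {i j : Fin n}
    (hij : i < j) (hinv : σ j < σ i) : ‖R (t i) (t j)‖ = 1 := by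
  have hne : Qprod n R σ t ≠ 0 := norm_ne_zero_iff.1 (hσ ▸ one_ne_zero)
  refine (habs _ _).resolve_left fun h => ?_
  exact prod_ne_zero_iff.1 hne (i, j) (by simp [hij, hinv]) (norm_eq_zero.1 h)

end Qprod

theorem Rprod_cocycle_general {T : Type*} {n : ℕ} (R : T → T → ℂ)
    (hherm : ∀ s t : T, R s t = starRingEnd ℂ (R t s))
    (habs : ∀ s t : T, ‖R s t‖ = 0 ∨ ‖R s t‖ = 1)
    (π ν : Equiv.Perm (Fin n)) (t : Fin n → T)
    (hπ : ‖Qprod n R π⁻¹ t‖ = 1) :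
    Qprod n R π⁻¹ t * Qprod n R ν⁻¹ (t ∘ π) = Qprod n R (π * ν)⁻¹ t := by
  have hunit : ∀ i j : Fin n, i < j → π⁻¹ j < π⁻¹ i → R (t i) (t j) * R (t j) (t i) = 1 := by
    intro i j hij hinv
    rw [hherm (t j), Complex.mul_conj', norm_eq_one_of_norm_Qprod_eq_one R habs hπ hij hinv]
    norm_num
  rw [Qprod_eq_inversionProd, Qprod_comp_eq_inversionProd, Qprod_eq_inversionProd, mul_inv_rev,
    Equiv.Perm.coe_mul]
  exact inversionProd_mul_inversionProd injective_id π⁻¹.injective (ν⁻¹ * π⁻¹).injective _ hunit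

/-- For `R` Hermitian with `|R| ∈ {0,1}`: if `π ∈ S_n^1(t)` and `ν ∈ S_n^1(t_π)`,
then the cocycle identity `R_{π⁻¹}(t) · R_{ν⁻¹}(t_π) = R_{ν⁻¹π⁻¹}(t)` holds. -/
theorem Rprod_cocycle {T : Type*} {n : ℕ} (R : T → T → ℂ)
    (hherm : ∀ s t : T, R s t = starRingEnd ℂ (R t s))
    (habs : ∀ s t : T, ‖R s t‖ = 0 ∨ ‖R s t‖ = 1)
    (π ν : Equiv.Perm (Fin n)) (t : Fin n → T)
    (hπ : ‖Qprod n R π⁻¹ t‖ = 1)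
    (hν : ‖Qprod n R ν⁻¹ (t ∘ π)‖ = 1) :
    Qprod n R π⁻¹ t * Qprod n R ν⁻¹ (t ∘ π) = Qprod n R (π * ν)⁻¹ t :=
  Rprod_cocycle_general R hherm habs π ν t hπ
end

section
/- Let T be a set, R : T × T → ℂ Hermitian with |R| ∈ {0,1}, and fix t = (t_1,…,t_{n+1}) ∈ T^{n+1} and i ∈ {1,…,n+1}. Let S^1_{n+1,i}(t) := {π ∈ S_{n+1} : |R_{π^{-1}}(t)| = 1, π(n+1) = i}. Then for any π ∈ S^1_{n+1,i}(t), the cardinality of S^1_{n+1,i}(t) equals c_n(t_{π(1)},…,t_{π(n)}), where c_n(s) is the number of ν ∈ S_n with |R_{ν^{-1}}(s)| = 1. Consequently ∑_{π ∈ S^1_{n+1,i}(t)} 1/c_n(t_{π(1)},…,t_{π(n)}) = 1 whenever S^1_{n+1,i}(t) is nonempty. -/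
/-- `c_n(t) := |{ν ∈ S_n : |R_{ν⁻¹}(t)| = 1}|`. -/
noncomputable def cN {T : Type*} (n : ℕ) (R : T → T → ℂ) (t : Fin n → T) : ℕ :=
  Nat.card {ν : Equiv.Perm (Fin n) // ‖Qprod n R ν⁻¹ t‖ = 1}

/-!
Say that `ρ ∈ S_m` is admissible for `u ∈ T^m` if every pair `a < b` inverted by `ρ` has
`|R(u_a, u_b)| = 1`; as `|R| ∈ {0, 1}`, this is exactly `|R_ρ(u)| = 1`. An inversion of `κρ` is
either an inversion of `ρ` or the `ρ`-preimage of an inversion of `κ`, and `|R|` is symmetric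
because `R` is Hermitian. Hence, if `π⁻¹` is admissible for `t`, then `(πτ)⁻¹` is admissible for
`t` iff `τ⁻¹` is admissible for `t ∘ π`. The permutations `σ` with `σ(n+1) = π(n+1)` are the
`π ν̂` with `ν ∈ S_n` and `ν̂` its extension fixing `n+1`, so `ν ↦ π ν̂` is a bijection onto
`S¹_{n+1,i}(t)` from the set counted by `c_n(t_{π(1)},…,t_{π(n)})`. Every summand is thus
`1 / |S¹_{n+1,i}(t)|`.
-/

open Equiv

section Admissible

variable {α T : Type*} [LinearOrder α] {r : T → T → Prop} {u : α → T} {ρ κ : Perm α}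

def Admissible (r : T → T → Prop) (u : α → T) (ρ : Perm α) : Prop :=
  ∀ ⦃a b⦄, a < b → ρ b < ρ a → r (u a) (u b)

theorem Admissible.mul (hρ : Admissible r u ρ) (hκ : Admissible r (u ∘ ⇑ρ⁻¹) κ) :
    Admissible r u (κ * ρ) := by
  intro a b hab hκρ
  rcases lt_or_gt_of_ne (ρ.injective.ne hab.ne) with hρab | hρba
  · simpa using hκ hρab hκρ
  · exact hρ hab hρba

theorem Admissible.inv [Std.Symm r] (hρ : Admissible r u ρ) :
    Admissible r (u ∘ ⇑ρ⁻¹) ρ⁻¹ := by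
  intro a b hab hba
  exact symm (hρ hba (by simpa using hab))

theorem Admissible.mul_iff [Std.Symm r] (hρ : Admissible r u ρ) :
    Admissible r u (κ * ρ) ↔ Admissible r (u ∘ ⇑ρ⁻¹) κ := by
  refine ⟨fun h => ?_, hρ.mul⟩
  simpa using hρ.inv.mul (κ := κ * ρ) (by simpa [Function.comp_def] using h)

end Admissible

theorem norm_Qprod_eq_one_iff {T : Type*} {m : ℕ} {R : T → T → ℂ}
    (habs : ∀ s t : T, ‖R s t‖ = 0 ∨ ‖R s t‖ = 1) (ρ : Perm (Fin m)) (u : Fin m → T) :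
    ‖Qprod m R ρ u‖ = 1 ↔ Admissible (fun x y => ‖R x y‖ = 1) u ρ := by
  rw [Qprod, norm_prod]
  constructor
  · intro h a b hab hba
    refine (habs _ _).resolve_left fun h0 => ?_
    rw [Finset.prod_eq_zero (i := (a, b)) (by simp [hab, hba]) h0] at h
    exact zero_ne_one h
  · intro h
    exact Finset.prod_eq_one fun p hp => h (Finset.mem_filter.1 hp).2.1 (Finset.mem_filter.1 hp).2.2

namespace Equiv.Perm

variable {n : ℕ}

def extendLast (ν : Perm (Fin n)) : Perm (Fin (n + 1)) :=
  finSuccEquivLast.symm.permCongr ν.optionCongr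

@[simp]
theorem extendLast_castSucc (ν : Perm (Fin n)) (j : Fin n) :
    ν.extendLast j.castSucc = (ν j).castSucc := by
  simp [extendLast, permCongr_apply]

@[simp]
theorem extendLast_last (ν : Perm (Fin n)) : ν.extendLast (Fin.last n) = Fin.last n := by
  simp [extendLast, permCongr_apply]

@[simp]
theorem extendLast_inv (ν : Perm (Fin n)) : ν⁻¹.extendLast = ν.extendLast⁻¹ :=
  rfl

theorem extendLast_injective : Function.Injective (extendLast (n := n)) :=
  (permCongr _).injective.comp optionCongr_injective

theorem exists_extendLast_eq {τ : Perm (Fin (n + 1))} (h : τ (Fin.last n) = Fin.last n) :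
    ∃ ν : Perm (Fin n), ν.extendLast = τ := by
  set σ := finSuccEquivLast.permCongr τ
  have hσ : σ none = none := by simp [σ, permCongr_apply, h]
  refine ⟨removeNone σ, ?_⟩
  rw [extendLast, map_equiv_removeNone, hσ, swap_self, ← one_def, one_mul]
  exact (permCongr finSuccEquivLast).symm_apply_apply τ

end Equiv.Perm

section FixingLast

open Equiv.Perm

variable {T : Type*} {n : ℕ} {r : T → T → Prop}

theorem admissible_extendLast_iff {v : Fin (n + 1) → T} {ν : Perm (Fin n)} :
    Admissible r v ν.extendLast ↔ Admissible r (v ∘ Fin.castSucc) ν := by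
  refine ⟨fun h a b hab hba => h (Fin.castSucc_lt_castSucc_iff.2 hab) (by simpa using hba),
    fun h c d hcd hdc => ?_⟩
  induction d using Fin.lastCases with
  | last => exact absurd hdc (by simpa using Fin.le_last _)
  | cast b =>
    induction c using Fin.lastCases with
    | last => exact absurd hcd (not_lt.2 (Fin.le_last _))
    | cast a => exact h (Fin.castSucc_lt_castSucc_iff.1 hcd) (by simpa using hdc)

theorem Admissible.mul_extendLast_inv_iff [Std.Symm r] {t : Fin (n + 1) → T}
    {π : Perm (Fin (n + 1))} (hπ : Admissible r t π⁻¹) (ν : Perm (Fin n)) :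
    Admissible r t (π * ν.extendLast)⁻¹ ↔ Admissible r (fun j => t (π j.castSucc)) ν⁻¹ := by
  rw [mul_inv_rev, ← extendLast_inv, hπ.mul_iff, inv_inv, admissible_extendLast_iff]
  rfl

theorem Admissible.card_fixing_last [Std.Symm r] {t : Fin (n + 1) → T}
    {π : Perm (Fin (n + 1))} (hπ : Admissible r t π⁻¹) :
    Nat.card {σ : Perm (Fin (n + 1)) | Admissible r t σ⁻¹ ∧ σ (Fin.last n) = π (Fin.last n)} =
      Nat.card {ν : Perm (Fin n) | Admissible r (fun j => t (π j.castSucc)) ν⁻¹} := by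
  suffices h : {σ : Perm (Fin (n + 1)) | Admissible r t σ⁻¹ ∧ σ (Fin.last n) = π (Fin.last n)} =
      (π * extendLast ·) '' {ν | Admissible r (fun j => t (π j.castSucc)) ν⁻¹} by
    rw [h]
    exact Nat.card_image_of_injective ((mul_right_injective π).comp extendLast_injective) _
  ext σ
  constructor
  · rintro ⟨hσ, hlast⟩
    obtain ⟨ν, hν⟩ := exists_extendLast_eq (τ := π⁻¹ * σ) (by simp [hlast])
    have hσν : π * ν.extendLast = σ := by rw [hν, mul_inv_cancel_left]
    exact ⟨ν, (hπ.mul_extendLast_inv_iff ν).1 (hσν ▸ hσ), hσν⟩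
  · rintro ⟨ν, hν, rfl⟩
    exact ⟨(hπ.mul_extendLast_inv_iff ν).2 hν, by simp⟩

end FixingLast

theorem finsum_mem_inv_natCard {α K : Type*} [DivisionRing K] [CharZero K] {s : Set α}
    (hs : s.Finite) (hne : s.Nonempty) : ∑ᶠ _ ∈ s, ((Nat.card s : K))⁻¹ = 1 := by
  rw [finsum_mem_eq_finite_toFinset_sum _ hs, Finset.sum_const, nsmul_eq_mul,
    Nat.card_coe_set_eq, Set.ncard_eq_toFinset_card _ hs]
  exact mul_inv_cancel₀ (by simpa using hne.ne_empty)

/-- For fixed `t ∈ T^{n+1}` and `i`, with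
`S¹_{n+1,i}(t) = {π ∈ S_{n+1} : |R_{π⁻¹}(t)| = 1, π(n+1) = i}`:
for any `π ∈ S¹_{n+1,i}(t)` its cardinality equals `c_n(t_{π(1)},…,t_{π(n)})`,
and consequently `∑_{π ∈ S¹_{n+1,i}(t)} 1/c_n(t_{π(1)},…,t_{π(n)}) = 1`
whenever the set is nonempty. -/
theorem card_S1_last_fixed_and_sum {T : Type*} {n : ℕ} (R : T → T → ℂ)
    (hherm : ∀ s t : T, R s t = starRingEnd ℂ (R t s))
    (habs : ∀ s t : T, ‖R s t‖ = 0 ∨ ‖R s t‖ = 1)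
    (t : Fin (n + 1) → T) (i : Fin (n + 1)) :
    (∀ π ∈ {π : Equiv.Perm (Fin (n + 1)) |
        ‖Qprod (n + 1) R π⁻¹ t‖ = 1 ∧ π (Fin.last n) = i},
      Nat.card {π : Equiv.Perm (Fin (n + 1)) |
          ‖Qprod (n + 1) R π⁻¹ t‖ = 1 ∧ π (Fin.last n) = i} =
        cN n R (fun j : Fin n => t (π j.castSucc))) ∧
    (({π : Equiv.Perm (Fin (n + 1)) |
        ‖Qprod (n + 1) R π⁻¹ t‖ = 1 ∧ π (Fin.last n) = i}).Nonempty →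
      ∑ᶠ π ∈ {π : Equiv.Perm (Fin (n + 1)) |
          ‖Qprod (n + 1) R π⁻¹ t‖ = 1 ∧ π (Fin.last n) = i},
        ((cN n R (fun j : Fin n => t (π j.castSucc)) : ℝ))⁻¹ = 1) := by
  have : Std.Symm fun x y : T => ‖R x y‖ = 1 := ⟨fun x y h => by rwa [hherm, Complex.norm_conj]⟩
  have hcN (s : Fin n → T) :
      cN n R s = Nat.card {ν : Perm (Fin n) | Admissible (fun x y => ‖R x y‖ = 1) s ν⁻¹} := by
    simp_rw [cN, norm_Qprod_eq_one_iff habs]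
    rfl
  set S := {π : Perm (Fin (n + 1)) | ‖Qprod (n + 1) R π⁻¹ t‖ = 1 ∧ π (Fin.last n) = i} with hS
  have hcard : ∀ π ∈ S, Nat.card S = cN n R (fun j => t (π j.castSucc)) := by
    rintro π ⟨hπ, rfl⟩
    simp_rw [hS, norm_Qprod_eq_one_iff habs, hcN]
    exact ((norm_Qprod_eq_one_iff habs _ _).1 hπ).card_fixing_last
  refine ⟨hcard, fun hne => ?_⟩
  refine (finsum_mem_congr rfl fun π hπ => ?_).trans (finsum_mem_inv_natCard S.toFinite hne)
  rw [hcard π hπ]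
end
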